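/- If there exists x ∈ relint C with −A x ∈ relint K (strict feasibility of the primal recession cone), then the polar cone of {x ∈ C : A x ∈ −K} equals A*(K*) − C* exactly (no closure needed): ({x ∈ C : A x ∈ −K})° = A*(K*) − C*. -/

import Mathlib

open RealInnerProductSpace Set Pointwise

variable {E E' : Type*}
  [NormedAddCommGroup E] [InnerProductSpace ℝ E] [FiniteDimensional ℝ E]
  [NormedAddCommGroup E'] [InnerProductSpace ℝ E'] [FiniteDimensional ℝ E']

/-- A nonempty closed convex cone containing `0`. -/
structure IsClosedConvexCone {F : Type*} [NormedAddCommGroup F] [InnerProductSpace ℝ F]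
    (K : Set F) : Prop where
  closed : IsClosed K
  convex : Convex ℝ K
  smul_mem : ∀ ⦃x⦄, x ∈ K → ∀ ⦃t : ℝ⦄, 0 ≤ t → t • x ∈ K
  zero_mem : (0 : F) ∈ K

/-- The dual cone `S* = {y : ⟨x,y⟩ ≥ 0 ∀ x ∈ S}`. -/
def dualCone {F : Type*} [NormedAddCommGroup F] [InnerProductSpace ℝ F] (S : Set F) : Set F :=
  {y | ∀ x ∈ S, 0 ≤ ⟪x, y⟫}

/-- The polar cone `S° = {y : ⟨x,y⟩ ≤ 0 ∀ x ∈ S}`. -/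
def polarCone {F : Type*} [NormedAddCommGroup F] [InnerProductSpace ℝ F] (S : Set F) : Set F :=
  {y | ∀ x ∈ S, ⟪x, y⟫ ≤ 0}

/-- Primal feasible set `X(b) = {x ∈ C : b - A x ∈ K}`. -/
def Xfeas (A : E →ₗ[ℝ] E') (K : Set E') (C : Set E) (b : E') : Set E :=
  {x | x ∈ C ∧ b - A x ∈ K}

/-- Dual feasible set `Y(c) = {y ∈ K* : A* y - c ∈ C*}`. -/
def Yfeas (A : E →ₗ[ℝ] E') (K : Set E') (C : Set E) (c : E) : Set E' :=
  {y | y ∈ dualCone K ∧ LinearMap.adjoint A y - c ∈ dualCone C}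

/-- Primal optimal value `P* = sup {⟨c,x⟩ : x ∈ X(b)}`. -/
noncomputable def Pval (A : E →ₗ[ℝ] E') (K : Set E') (C : Set E) (b : E') (c : E) : ℝ :=
  sSup ((fun x => ⟪c, x⟫) '' Xfeas A K C b)

/-- Dual optimal value `D* = inf {⟨b,y⟩ : y ∈ Y(c)}`. -/
noncomputable def Dval (A : E →ₗ[ℝ] E') (K : Set E') (C : Set E) (b : E') (c : E) : ℝ :=
  sInf ((fun y => ⟪b, y⟫) '' Yfeas A K C c)

/-- Recession cone of the primal feasible region: `{x ∈ C : A x ∈ -K}`. -/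
def recXSet (A : E →ₗ[ℝ] E') (K : Set E') (C : Set E) : Set E :=
  {x | x ∈ C ∧ A x ∈ -K}

/-- Recession cone of the dual feasible region: `{y ∈ K* : A* y ∈ C*}`. -/
def recYSet (A : E →ₗ[ℝ] E') (K : Set E') (C : Set E) : Set E' :=
  {y | y ∈ dualCone K ∧ LinearMap.adjoint A y ∈ dualCone C}

/-- `X(b)` is almost feasible. -/
def AlmostFeasX (A : E →ₗ[ℝ] E') (K : Set E') (C : Set E) (b : E') : Prop :=
  ∀ ε : ℝ, 0 < ε → ∃ bε : E', ‖bε‖ ≤ ε ∧ (Xfeas A K C (b + bε)).Nonempty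

/-- `Y(c)` is almost feasible. -/
def AlmostFeasY (A : E →ₗ[ℝ] E') (K : Set E') (C : Set E) (c : E) : Prop :=
  ∀ ε : ℝ, 0 < ε → ∃ cε : E, ‖cε‖ ≤ ε ∧ (Yfeas A K C (c + cε)).Nonempty

/-!
`A*(K*) - C*` is the image of the closed cone `K* × C*` under `(y, z) ↦ A* y - z`. If `(y, z)` is
in the kernel, then `⟪-A x₀, y⟫ + ⟪x₀, z⟫ = 0` with both terms nonnegative; as `-A x₀` and `x₀`
are relative interior points, `y` vanishes on `K` and `z` on `C`. So the kernel meets `K* × C*` in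
a subspace, which makes the image closed (finite dimension). A closed convex cone is its own
bipolar, and by the bipolar theorem for `K` and `C` the dual of `A*(K*) - C*` is
`-{x ∈ C : A x ∈ -K}`.
-/

open Topology

section ClosedImage

variable {F G : Type*} [NormedAddCommGroup F] [NormedSpace ℝ F]
  [NormedAddCommGroup G] [NormedSpace ℝ G]

theorem isClosed_image_of_norm_le_mul_norm [ProperSpace F] {s : Set F} (hs : IsClosed s)
    (L : F →L[ℝ] G) {c : ℝ} (hc : ∀ x ∈ s, ‖x‖ ≤ c * ‖L x‖) : IsClosed (L '' s) := by
  refine isClosed_of_closure_subset fun g hg => ?_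
  set r := ‖g‖ + 1
  set t := s ∩ L ⁻¹' Metric.closedBall 0 r
  have ht : IsCompact t := by
    refine Metric.isCompact_of_isClosed_isBounded
      (hs.inter (Metric.isClosed_closedBall.preimage L.continuous)) ?_
    refine (Metric.isBounded_closedBall (x := (0 : F)) (r := |c| * r)).subset fun x hx => ?_
    rw [mem_closedBall_zero_iff]
    calc ‖x‖ ≤ c * ‖L x‖ := hc x hx.1
      _ ≤ |c| * ‖L x‖ := by gcongr; exact le_abs_self c
      _ ≤ |c| * r := by gcongr; exact mem_closedBall_zero_iff.1 hx.2
  have hg' : g ∈ closure (L '' t) := by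
    refine closure_mono ?_ (Metric.isOpen_ball.inter_closure
      ⟨mem_ball_zero_iff.2 (lt_add_one _), hg⟩)
    rintro _ ⟨hy, x, hx, rfl⟩
    exact ⟨x, ⟨hx, Metric.ball_subset_closedBall hy⟩, rfl⟩
  exact image_mono inter_subset_left ((ht.image L.continuous).isClosed.closure_subset hg')

theorem PointedCone.exists_norm_le_mul_norm [ProperSpace F] (D : PointedCone ℝ F)
    (hD : IsClosed (D : Set F)) (L : F →L[ℝ] G) (hL : ∀ d ∈ D, L d = 0 → d = 0) :
    ∃ c, ∀ d ∈ D, ‖d‖ ≤ c * ‖L d‖ := by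
  have hcpt : IsCompact ((D : Set F) ∩ Metric.sphere 0 1) := (isCompact_sphere 0 1).inter_left hD
  obtain ⟨m, hm, hmL⟩ := hcpt.exists_forall_le' L.continuous.norm.continuousOn (a := 0)
    fun u hu => norm_pos_iff.2 fun h => by simp [hL u hu.1 h] at hu
  refine ⟨m⁻¹, fun d hd => ?_⟩
  rcases eq_or_ne d 0 with rfl | hd0
  · simp
  have hu : ‖d‖⁻¹ • d ∈ (D : Set F) ∩ Metric.sphere 0 1 :=
    ⟨D.smul_mem (by positivity) hd, by simp [norm_smul, hd0]⟩
  have hmd := hmL _ hu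
  rw [map_smul, norm_smul, norm_inv, norm_norm] at hmd
  rw [inv_mul_eq_div, le_div_iff₀ hm, mul_comm]
  rwa [le_inv_mul_iff₀ (norm_pos_iff.2 hd0), mul_comm] at hmd

theorem PointedCone.isClosed_image_of_neg_mem [FiniteDimensional ℝ F] (D : PointedCone ℝ F)
    (hD : IsClosed (D : Set F)) (L : F →ₗ[ℝ] G) (hL : ∀ d ∈ D, L d = 0 → -d ∈ D) :
    IsClosed (L '' D) := by
  -- By `hL`, `D ∩ ker L` is a subspace; cutting `D` with a complement of it loses nothing of
  -- the image and leaves a cone meeting `ker L` only at `0`.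
  obtain ⟨W, hW⟩ := (D.lineal ⊓ LinearMap.ker L).exists_isCompl
  set D' : PointedCone ℝ F := D ⊓ .ofSubmodule W
  have himage : L '' D = L '' D' := by
    refine subset_antisymm ?_ (image_mono inter_subset_left)
    rintro _ ⟨d, hd, rfl⟩
    obtain ⟨v, hv, w, hw, rfl⟩ := Submodule.mem_sup.1 (hW.sup_eq_top ▸ Submodule.mem_top (x := d))
    obtain ⟨⟨-, hvneg⟩, hvker⟩ := Submodule.mem_inf.1 hv
    refine ⟨w, ⟨?_, hw⟩, by simp [LinearMap.mem_ker.1 hvker]⟩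
    simpa using D.add_mem hd hvneg
  have hD' : IsClosed (D' : Set F) := hD.inter W.closed_of_finiteDimensional
  obtain ⟨c, hc⟩ := D'.exists_norm_le_mul_norm hD' L.toContinuousLinearMap fun d hd hLd => by
    have hdV : d ∈ D.lineal ⊓ LinearMap.ker L := ⟨⟨hd.1, hL d hd.1 hLd⟩, hLd⟩
    simpa [hW.inf_eq_bot] using Submodule.mem_inf.2 ⟨hdV, hd.2⟩
  rw [himage]
  exact isClosed_image_of_norm_le_mul_norm hD' L.toContinuousLinearMap hc

end ClosedImage

section Cones

variable {F : Type*} [NormedAddCommGroup F] [InnerProductSpace ℝ F]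

theorem exists_pos_add_smul_sub_mem_of_mem_intrinsicInterior {s : Set F} {x y : F}
    (hx : x ∈ intrinsicInterior ℝ s) (hy : y ∈ s) : ∃ t > (0 : ℝ), x + t • (x - y) ∈ s := by
  obtain ⟨z, hz, rfl⟩ := mem_intrinsicInterior.1 hx
  let extend : ℝ → affineSpan ℝ s := fun t =>
    ⟨AffineMap.lineMap y z (1 + t), AffineMap.lineMap_mem _ (subset_affineSpan ℝ s hy) z.2⟩
  have hextend : Continuous extend := by fun_prop
  have hz' : extend 0 = z := by ext; simp [extend]
  have hev : ∀ᶠ t in 𝓝[>] 0, extend t ∈ interior ((↑) ⁻¹' s) :=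
    nhdsWithin_le_nhds ((hextend.tendsto 0).eventually (isOpen_interior.mem_nhds (hz' ▸ hz)))
  obtain ⟨t, hts, ht⟩ := (hev.and self_mem_nhdsWithin).exists
  refine ⟨t, ht, ?_⟩
  have hmem := interior_subset hts
  simp only [extend, mem_preimage, AffineMap.lineMap_apply_module] at hmem
  convert hmem using 1
  module

theorem neg_mem_dualCone_of_inner_eq_zero {s : Set F} {x y : F} (hy : y ∈ dualCone s)
    (hx : x ∈ intrinsicInterior ℝ s) (hxy : ⟪x, y⟫ = 0) : -y ∈ dualCone s := by
  intro k hk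
  obtain ⟨t, ht, hmem⟩ := exists_pos_add_smul_sub_mem_of_mem_intrinsicInterior hx hk
  have h := hy _ hmem
  rw [inner_add_left, real_inner_smul_left, inner_sub_left, hxy] at h
  rw [inner_neg_right]
  nlinarith [hy k hk]

theorem zero_mem_dualCone (s : Set F) : (0 : F) ∈ dualCone s :=
  fun _ _ => (inner_zero_right _).ge

theorem polarCone_eq_dualCone_neg (s : Set F) : polarCone s = dualCone (-s) := by
  ext y
  refine ⟨fun h x hx => ?_, fun h x hx => ?_⟩
  · simpa [inner_neg_left] using h (-x) hx
  · simpa [inner_neg_left] using h (-x) (by simpa using hx)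

theorem PointedCone.dualCone_dualCone [CompleteSpace F] (P : PointedCone ℝ F)
    (hP : IsClosed (P : Set F)) : dualCone (dualCone (P : Set F)) = P :=
  -- `dualCone s` is definitionally the carrier of `ProperCone.innerDual s`.
  congrArg SetLike.coe (ProperCone.innerDual_innerDual ⟨P, hP⟩)

theorem IsClosedConvexCone.add_mem {K : Set F} (hK : IsClosedConvexCone K) {x y : F}
    (hx : x ∈ K) (hy : y ∈ K) : x + y ∈ K := by
  have hmid := hK.convex hx hy (by norm_num : (0 : ℝ) ≤ 1 / 2) (by norm_num : (0 : ℝ) ≤ 1 / 2)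
    (by norm_num)
  convert hK.smul_mem hmid (by norm_num : (0 : ℝ) ≤ 2) using 1
  module

def IsClosedConvexCone.toPointedCone {K : Set F} (hK : IsClosedConvexCone K) :
    PointedCone ℝ F where
  carrier := K
  add_mem' := hK.add_mem
  zero_mem' := hK.zero_mem
  smul_mem' c _ hx := hK.smul_mem hx c.2

theorem IsClosedConvexCone.dualCone_dualCone [CompleteSpace F] {K : Set F}
    (hK : IsClosedConvexCone K) : dualCone (dualCone K) = K :=
  hK.toPointedCone.dualCone_dualCone hK.closed

end Cones

section ConicDuality

variable {A : E →ₗ[ℝ] E'} {K : Set E'} {C : Set E}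

theorem dualCone_adjoint_image_dualCone_add_neg_dualCone (hK : IsClosedConvexCone K)
    (hC : IsClosedConvexCone C) :
    dualCone (⇑(LinearMap.adjoint A) '' dualCone K + -dualCone C) = -recXSet A K C := by
  ext x
  rw [Set.mem_neg]
  change _ ↔ -x ∈ C ∧ A (-x) ∈ -K
  rw [map_neg, Set.mem_neg, neg_neg]
  constructor
  · intro hx
    refine ⟨?_, ?_⟩
    · rw [← hC.dualCone_dualCone]
      intro z hz
      have h := hx (-z)
        ⟨0, ⟨0, zero_mem_dualCone K, map_zero _⟩, -z, by simpa using hz, zero_add _⟩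
      rwa [inner_neg_left, ← inner_neg_right] at h
    · rw [← hK.dualCone_dualCone]
      intro y hy
      have h := hx _ ⟨_, ⟨y, hy, rfl⟩, 0, by simpa using zero_mem_dualCone C, add_zero _⟩
      rwa [LinearMap.adjoint_inner_left] at h
  · rintro ⟨hxC, hxK⟩ _ ⟨_, ⟨y, hy, rfl⟩, z, hz, rfl⟩
    have hAx := hy _ hxK
    have hxz := hz _ hxC
    rw [inner_add_left, LinearMap.adjoint_inner_left, real_inner_comm]
    rw [inner_neg_neg] at hxz
    linarith [real_inner_comm x z]

theorem neg_mem_dualCone_of_adjoint_eq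
    (hstrict : ∃ x ∈ intrinsicInterior ℝ C, -A x ∈ intrinsicInterior ℝ K)
    {y : E'} {z : E} (hy : y ∈ dualCone K) (hz : z ∈ dualCone C)
    (hyz : LinearMap.adjoint A y = z) : -y ∈ dualCone K ∧ -z ∈ dualCone C := by
  obtain ⟨x, hxC, hxK⟩ := hstrict
  have hsum : ⟪-A x, y⟫ + ⟪x, z⟫ = 0 := by
    rw [← hyz, inner_neg_left, LinearMap.adjoint_inner_right, neg_add_cancel]
  have hAx := hy _ (intrinsicInterior_subset hxK)
  have hxz := hz _ (intrinsicInterior_subset hxC)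
  exact ⟨neg_mem_dualCone_of_inner_eq_zero hy hxK (by linarith),
    neg_mem_dualCone_of_inner_eq_zero hz hxC (by linarith)⟩

theorem adjoint_image_dualCone_add_neg_dualCone_eq_map :
    ⇑(LinearMap.adjoint A) '' dualCone K + -dualCone C =
      PointedCone.map ((LinearMap.adjoint A).coprod (-LinearMap.id))
        ((ProperCone.innerDual K : PointedCone ℝ E').prod
          (ProperCone.innerDual C : PointedCone ℝ E)) := by
  ext w
  constructor
  · rintro ⟨_, ⟨y, hy, rfl⟩, z, hz, rfl⟩
    exact ⟨(y, -z), ⟨hy, hz⟩, by simp⟩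
  · rintro ⟨⟨y, z⟩, ⟨hy, hz⟩, rfl⟩
    exact ⟨_, mem_image_of_mem _ hy, -z, Set.neg_mem_neg.2 hz, by simp⟩

theorem isClosed_adjoint_image_dualCone_add_neg_dualCone
    (hstrict : ∃ x ∈ intrinsicInterior ℝ C, -A x ∈ intrinsicInterior ℝ K) :
    IsClosed (⇑(LinearMap.adjoint A) '' dualCone K + -dualCone C) := by
  rw [adjoint_image_dualCone_add_neg_dualCone_eq_map]
  refine PointedCone.isClosed_image_of_neg_mem _
    ((ProperCone.innerDual K).isClosed.prod (ProperCone.innerDual C).isClosed) _ ?_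
  rintro ⟨y, z⟩ ⟨hy, hz⟩ hyz
  exact neg_mem_dualCone_of_adjoint_eq hstrict hy hz
    (by simpa [← sub_eq_add_neg, sub_eq_zero] using hyz)

end ConicDuality

theorem stmt9 (A : E →ₗ[ℝ] E') (K : Set E') (C : Set E)
    (hK : IsClosedConvexCone K) (hC : IsClosedConvexCone C)
    (hstrict : ∃ x ∈ intrinsicInterior ℝ C, -A x ∈ intrinsicInterior ℝ K) :
    polarCone (recXSet A K C) =
      (⇑(LinearMap.adjoint A) '' dualCone K) + (-(dualCone C)) := by
  have hclosed := isClosed_adjoint_image_dualCone_add_neg_dualCone hstrict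
  rw [polarCone_eq_dualCone_neg, ← dualCone_adjoint_image_dualCone_add_neg_dualCone hK hC]
  rw [adjoint_image_dualCone_add_neg_dualCone_eq_map] at hclosed ⊢
  exact PointedCone.dualCone_dualCone _ hclosed
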